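/- Let A be a σ-set with antiset A⁻. Every element M of the integer space 3^A = {X ⊕ Y : X ⊆ A, Y ⊆ A⁻} can be written uniquely as P ∪ (star '' Q) where P, Q are disjoint subsets of A; equivalently, M ∈ 3^A if and only if M ⊆ A ∪ A⁻ and M contains no pair {x, star x}. -/
import Mathlib


variable {α : Type*} [DecidableEq α]

/-- The *-intersection: `A ∗∩ B = {x ∈ A : star x ∈ B}`. -/
def sInter (star : α → α) (A B : Finset α) : Finset α :=
  A.filter (fun x => star x ∈ B)

/-- The *-difference: `A ∗ B = A \ (A ∗∩ B)`. -/
def sDiff (star : α → α) (A B : Finset α) : Finset α :=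
  A \ sInter star A B

/-- The fusion: `A ⊕ B = (A ∗ B) ∪ (B ∗ A)`. -/
def fusion (star : α → α) (A B : Finset α) : Finset α :=
  sDiff star A B ∪ sDiff star B A

/-- A σ-set: never contains an element together with its anti-element. -/
def IsSigmaSet (star : α → α) (A : Finset α) : Prop :=
  ∀ x ∈ A, star x ∉ A

/-- The generated space `⟨2^A, 2^B⟩ = {X ⊕ Y : X ⊆ A, Y ⊆ B}`. -/
def genSpace (star : α → α) (A B : Finset α) : Finset (Finset α) :=
  (A.powerset ×ˢ B.powerset).image (fun p => fusion star p.1 p.2)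

lemma mem_fusion (star : α → α) (X Y : Finset α) (x : α) :
    x ∈ fusion star X Y ↔ (x ∈ X ∧ star x ∉ Y) ∨ (x ∈ Y ∧ star x ∉ X) := by
  simp only [fusion, sDiff, sInter, Finset.mem_union, Finset.mem_sdiff, Finset.mem_filter]
  tauto

lemma mem_image_star (star : α → α) (hinv : Function.Involutive star) (A : Finset α) (x : α) :
    x ∈ A.image star ↔ star x ∈ A := by
  constructor
  · rintro hx
    rcases Finset.mem_image.1 hx with ⟨a, ha, rfl⟩
    rwa [hinv a]
  · intro h
    exact Finset.mem_image.2 ⟨star x, h, hinv x⟩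

lemma mem_genSpace_iff (star : α → α) (hinv : Function.Involutive star)
    (A : Finset α) (hA : IsSigmaSet star A) (M : Finset α) :
    M ∈ genSpace star A (A.image star) ↔
      M ⊆ A ∪ A.image star ∧ ∀ x ∈ M, star x ∉ M := by
  simp only [genSpace, Finset.mem_image, Finset.mem_product, Finset.mem_powerset, Prod.exists]
  constructor
  · rintro ⟨X, Y, ⟨hX, hY⟩, rfl⟩
    constructor
    · intro x hx
      rcases (mem_fusion star X Y x).1 hx with ⟨h1, _⟩ | ⟨h1, _⟩
      · exact Finset.mem_union_left _ (hX h1)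
      · exact Finset.mem_union_right _ (hY h1)
    · intro x hx hsx
      rw [mem_fusion] at hx hsx
      rw [hinv x] at hsx
      rcases hx with ⟨xX, sxY⟩ | ⟨xY, sxX⟩
      · rcases hsx with ⟨sxX, _⟩ | ⟨sxY', _⟩
        · exact hA x (hX xX) (hX sxX)
        · exact sxY sxY'
      · rcases hsx with ⟨sxX', _⟩ | ⟨sxY, _⟩
        · exact sxX sxX'
        · have h1 : star x ∈ A := (mem_image_star star hinv A x).1 (hY xY)
          have h2 : star (star x) ∈ A := (mem_image_star star hinv A (star x)).1 (hY sxY)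
          rw [hinv x] at h2
          exact hA x h2 h1
  · rintro ⟨hsub, hsig⟩
    refine ⟨M ∩ A, M \ A, ⟨Finset.inter_subset_right, ?_⟩, ?_⟩
    · intro x hx
      rw [Finset.mem_sdiff] at hx
      rcases Finset.mem_union.1 (hsub hx.1) with h | h
      · exact absurd h hx.2
      · exact h
    · ext x
      rw [mem_fusion]
      simp only [Finset.mem_inter, Finset.mem_sdiff]
      constructor
      · rintro (⟨⟨h, _⟩, _⟩ | ⟨⟨h, _⟩, _⟩) <;> exact h
      · intro hx
        by_cases hx' : x ∈ A
        · exact Or.inl ⟨⟨hx, hx'⟩, fun h => hsig x hx h.1⟩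
        · exact Or.inr ⟨⟨hx, hx'⟩, fun h => hsig x hx h.1⟩

theorem stmt_12 (star : α → α) (hinv : Function.Involutive star)
    (hne : ∀ x, star x ≠ x) (A : Finset α) (hA : IsSigmaSet star A) :
    (∀ M ∈ genSpace star A (A.image star),
      ∃! PQ : Finset α × Finset α,
        PQ.1 ⊆ A ∧ PQ.2 ⊆ A ∧ Disjoint PQ.1 PQ.2 ∧ M = PQ.1 ∪ PQ.2.image star) ∧
    (∀ M : Finset α, M ∈ genSpace star A (A.image star) ↔
      M ⊆ A ∪ A.image star ∧ ∀ x ∈ M, star x ∉ M) := by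
  constructor
  · intro M hM
    obtain ⟨hsub, hsig⟩ := (mem_genSpace_iff star hinv A hA M).1 hM
    refine ⟨(M ∩ A, A.filter (fun y => star y ∈ M)), ⟨Finset.inter_subset_right,
      Finset.filter_subset _ _, ?_, ?_⟩, ?_⟩
    · rw [Finset.disjoint_left]
      intro x hx hx'
      rw [Finset.mem_inter] at hx
      rw [Finset.mem_filter] at hx'
      exact hsig x hx.1 hx'.2
    · ext x
      simp only [Finset.mem_union, Finset.mem_inter, Finset.mem_image, Finset.mem_filter]
      constructor
      · intro hx
        by_cases hx' : x ∈ A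
        · exact Or.inl ⟨hx, hx'⟩
        · rcases Finset.mem_union.1 (hsub hx) with h | h
          · exact absurd h hx'
          · have := (mem_image_star star hinv A x).1 h
            exact Or.inr ⟨star x, ⟨this, by rwa [hinv x]⟩, hinv x⟩
      · rintro (⟨h, _⟩ | ⟨y, ⟨_, hy⟩, rfl⟩)
        · exact h
        · exact hy
    · rintro ⟨P, Q⟩ ⟨hP, hQ, hd, heq⟩
      have hQs : ∀ x ∈ Q.image star, x ∉ A := by
        rintro x hx hxA
        rcases Finset.mem_image.1 hx with ⟨y, hy, rfl⟩
        exact hA y (hQ hy) hxA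
      have hPeq : P = M ∩ A := by
        ext x
        rw [Finset.mem_inter]
        constructor
        · intro hx
          exact ⟨heq ▸ Finset.mem_union_left _ hx, hP hx⟩
        · rintro ⟨hxM, hxA⟩
          rcases Finset.mem_union.1 (heq ▸ hxM) with h | h
          · exact h
          · exact absurd hxA (hQs x h)
      have hQeq : Q = A.filter (fun y => star y ∈ M) := by
        ext y
        rw [Finset.mem_filter]
        constructor
        · intro hy
          exact ⟨hQ hy, heq ▸ Finset.mem_union_right _ (Finset.mem_image_of_mem star hy)⟩
        · rintro ⟨hyA, hyM⟩
          rcases Finset.mem_union.1 (heq ▸ hyM) with h | h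
          · exact absurd (hP h) (hA y hyA)
          · rcases Finset.mem_image.1 h with ⟨z, hz, hzy⟩
            rwa [← hinv.injective hzy]
      exact Prod.ext hPeq hQeq
  · exact mem_genSpace_iff star hinv A hA
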